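/- The Euler allocation of the floored FRTB expected shortfall is a full allocation (claim in Remark 3.5): Let N be a positive integer and for each j ∈ Fin 5 let g_j : (Fin N → ℝ) → ℝ be positively homogeneous of degree 1 and Fréchet differentiable at the all-ones vector 𝟙. Set ES⁺ = sqrt(∑_{j ∈ Fin 5} max(g_j(𝟙), 0)²) and assume ES⁺ ≠ 0. Define the floored Euler allocation by A_n(j) = (max(g_j(𝟙),0)/ES⁺) · (fderiv ℝ g_j 𝟙)(e_n) if g_j(𝟙) > 0, and A_n(j) = 0 otherwise. Then ∑_{n ∈ Fin N} ∑_{j ∈ Fin 5} A_n(j) = ES⁺. -/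

import Mathlib

/-! Euler's theorem for positively homogeneous functions gives `Dg_j(𝟙) 𝟙 = g_j(𝟙)`, and
`𝟙 = ∑ₙ eₙ`, so the allocations of bucket `j` add up to `max(g_j(𝟙), 0) g_j(𝟙) / ES⁺`, which is
`max(g_j(𝟙), 0)² / ES⁺` whether or not the bucket is floored. Summing over `j` gives
`(ES⁺)² / ES⁺ = ES⁺`. -/

open Finset

theorem fderiv_apply_self_of_pos_homogeneous {E F : Type*} [NormedAddCommGroup E]
    [NormedSpace ℝ E] [NormedAddCommGroup F] [NormedSpace ℝ F] {g : E → F} {x : E}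
    (hhom : ∀ a : ℝ, 0 < a → g (a • x) = a • g x) (hdiff : DifferentiableAt ℝ g x) :
    fderiv ℝ g x x = g x := by
  have hray : HasDerivAt (fun a : ℝ => a • x) x 1 := by
    simpa using (hasDerivAt_id (1 : ℝ)).smul_const x
  have hchain : HasDerivAt (fun a : ℝ => g (a • x)) (fderiv ℝ g x x) 1 :=
    hdiff.hasFDerivAt.comp_hasDerivAt_of_eq 1 hray (one_smul ℝ x).symm
  have hlin : HasDerivAt (fun a : ℝ => a • g x) (g x) 1 := by
    simpa using (hasDerivAt_id (1 : ℝ)).smul_const (g x)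
  have hagree : (fun a : ℝ => g (a • x)) =ᶠ[nhds 1] fun a => a • g x := by
    filter_upwards [eventually_gt_nhds one_pos] with a ha
    exact hhom a ha
  exact hchain.unique (hlin.congr_of_eventuallyEq hagree)

theorem sum_map_pi_single_one {ι R M G : Type*} [Fintype ι] [DecidableEq ι] [Semiring R]
    [AddCommMonoid M] [FunLike G (ι → R) M] [AddMonoidHomClass G (ι → R) M] (L : G) :
    ∑ n, L (Pi.single n 1) = L 1 := by
  rw [← map_sum, ← univ_sum_single (1 : ι → R)]
  rfl

theorem sum_floored_weight_mul_self {ι : Type*} [Fintype ι] (x : ι → ℝ)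
    (hne : Real.sqrt (∑ j, max (x j) 0 ^ 2) ≠ 0) :
    ∑ j, (if 0 < x j then max (x j) 0 / Real.sqrt (∑ k, max (x k) 0 ^ 2) * x j else 0)
      = Real.sqrt (∑ j, max (x j) 0 ^ 2) := by
  set S := Real.sqrt (∑ j, max (x j) 0 ^ 2)
  have hterm : ∀ j, (if 0 < x j then max (x j) 0 / S * x j else 0) = max (x j) 0 ^ 2 / S := by
    intro j
    split_ifs with hpos
    · rw [max_eq_left hpos.le]
      ring
    · simp [max_eq_right (not_lt.mp hpos)]
  have hsq : ∑ j, max (x j) 0 ^ 2 = S ^ 2 :=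
    (Real.sq_sqrt (sum_nonneg fun j _ => sq_nonneg _)).symm
  rw [sum_congr rfl fun j _ => hterm j, ← sum_div, hsq, sq, mul_div_cancel_right₀ _ hne]

theorem floored_euler_allocation_full_general {N : ℕ}
    (g : Fin 5 → (Fin N → ℝ) → ℝ)
    (hhom : ∀ j, ∀ (a : ℝ), 0 ≤ a → ∀ v : Fin N → ℝ, g j (a • v) = a * g j v)
    (hdiff : ∀ j, DifferentiableAt ℝ (g j) (1 : Fin N → ℝ))
    (hne : Real.sqrt (∑ j, (max (g j (1 : Fin N → ℝ)) 0) ^ 2) ≠ 0) :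
    ∑ n : Fin N, ∑ j : Fin 5,
        (if 0 < g j (1 : Fin N → ℝ) then
          (max (g j (1 : Fin N → ℝ)) 0
              / Real.sqrt (∑ k, (max (g k (1 : Fin N → ℝ)) 0) ^ 2))
            * (fderiv ℝ (g j) (1 : Fin N → ℝ)) (Pi.single n 1)
        else 0)
      = Real.sqrt (∑ j, (max (g j (1 : Fin N → ℝ)) 0) ^ 2) := by
  have heuler : ∀ j, ∑ n : Fin N, fderiv ℝ (g j) 1 (Pi.single n 1) = g j 1 := fun j => by
    rw [sum_map_pi_single_one]
    exact fderiv_apply_self_of_pos_homogeneous (fun a ha => hhom j a ha.le 1) (hdiff j)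
  rw [sum_comm]
  refine (sum_congr rfl fun j _ => ?_).trans (sum_floored_weight_mul_self (fun j => g j 1) hne)
  split_ifs
  · rw [← mul_sum, heuler]
  · exact sum_const_zero

/-- The Euler allocation of the floored FRTB expected shortfall is a full
allocation (Remark 3.5). -/
theorem floored_euler_allocation_full {N : ℕ} (hN : 0 < N)
    (g : Fin 5 → (Fin N → ℝ) → ℝ)
    (hhom : ∀ j, ∀ (a : ℝ), 0 ≤ a → ∀ v : Fin N → ℝ, g j (a • v) = a * g j v)
    (hdiff : ∀ j, DifferentiableAt ℝ (g j) (1 : Fin N → ℝ))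
    (hne : Real.sqrt (∑ j, (max (g j (1 : Fin N → ℝ)) 0) ^ 2) ≠ 0) :
    ∑ n : Fin N, ∑ j : Fin 5,
        (if 0 < g j (1 : Fin N → ℝ) then
          (max (g j (1 : Fin N → ℝ)) 0
              / Real.sqrt (∑ k, (max (g k (1 : Fin N → ℝ)) 0) ^ 2))
            * (fderiv ℝ (g j) (1 : Fin N → ℝ)) (Pi.single n 1)
        else 0)
      = Real.sqrt (∑ j, (max (g j (1 : Fin N → ℝ)) 0) ^ 2) :=
  floored_euler_allocation_full_general g hhom hdiff hne
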